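/- Let (W₁, W₂) be a pair of independent standard Brownian motions and fix α ∈ (1,2). For δ > 0 set v = 2δ^{−α}; for a solution (Q₁,Q₂) of the two-armed Thompson sampling limit ODE with arm gap δ define g₁(t) = √(Q₁(t)/t) and τ*_δ = inf{t ∈ [0,1] : Q₂(t) ≥ δ^{−α}} (with τ*_δ = 1 if no such t exists). Then almost surely there exist a constant C > 0 and a threshold δ₀ such that for every δ ≥ δ₀ and every solution (Q₁,Q₂) driven by (W₁(ω), W₂(ω)) with arm gap δ satisfying Q₁(v) ≥ δ^{−α}, one has for all t ∈ [τ*_δ, 1): Q₂'(t) ≤ Φ( −g₁(t)·√(Q₂(t))·δ + C·√(log log δ) ). -/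

import Mathlib

open MeasureTheory ProbabilityTheory Filter Set

/-- The standard normal distribution function `Φ`. -/
noncomputable def Phi (x : ℝ) : ℝ :=
  ∫ s in Set.Iic x, (Real.sqrt (2 * Real.pi))⁻¹ * Real.exp (-s ^ 2 / 2)

/-- `W` is a standard Brownian motion under `P`: continuous sample paths, `W₀ = 0`,
Gaussian increments `W_t - W_s ~ N(0, t - s)`, and independent increments. -/
def IsStdBM {Ω : Type*} [MeasurableSpace Ω] (P : Measure Ω) (W : ℝ → Ω → ℝ) : Prop :=
  (∀ ω, Continuous fun t => W t ω) ∧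
  (∀ ω, W 0 ω = 0) ∧
  (∀ s t : ℝ, 0 ≤ s → s < t →
    Measure.map (fun ω => W t ω - W s ω) P = gaussianReal 0 (Real.toNNReal (t - s))) ∧
  (∀ (n : ℕ) (t : Fin (n + 1) → ℝ), (∀ i, 0 ≤ t i) → StrictMono t →
    iIndepFun
      (fun i : Fin n => fun ω => W (t i.succ) ω - W (t i.castSucc) ω) P)

/-- `W₁, W₂` are independent standard Brownian motions under `P`. -/
def IndepBMs {Ω : Type*} [MeasurableSpace Ω] (P : Measure Ω) (W₁ W₂ : ℝ → Ω → ℝ) : Prop :=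
  IsStdBM P W₁ ∧ IsStdBM P W₂ ∧
  IndepFun (fun ω => fun t => W₁ t ω) (fun ω => fun t => W₂ t ω) P

/-- A solution of the two-armed Thompson sampling limit ODE driven by `(w₁, w₂)`
with arm gap `δ`, unit variance and no smoothing. -/
def IsTwoArmSol (w₁ w₂ : ℝ → ℝ) (δ : ℝ) (Q₁ Q₂ : ℝ → ℝ) : Prop :=
  ContinuousOn Q₁ (Set.Icc 0 1) ∧ ContinuousOn Q₂ (Set.Icc 0 1) ∧
  MonotoneOn Q₁ (Set.Icc 0 1) ∧ MonotoneOn Q₂ (Set.Icc 0 1) ∧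
  Q₁ 0 = 0 ∧ Q₂ 0 = 0 ∧ (∀ t ∈ Set.Icc (0:ℝ) 1, Q₁ t + Q₂ t = t) ∧
  (∀ t ∈ Set.Ioc (0:ℝ) 1, 0 < Q₁ t) ∧ (∀ t ∈ Set.Ioc (0:ℝ) 1, 0 < Q₂ t) ∧
  (∀ t ∈ Set.Ioc (0:ℝ) 1,
    HasDerivWithinAt Q₁
      (Phi ((δ * Q₁ t * Q₂ t + Q₂ t * w₁ (Q₁ t) - Q₁ t * w₂ (Q₂ t)) /
        Real.sqrt (t * Q₁ t * Q₂ t))) (Set.Icc 0 1) t)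

/-!
Almost every Brownian path obeys an iterated-logarithm bound at the origin,
`|W s| ≤ A √(s (1 + log (1 + log s⁻¹)))` on `(0, 1]`. It comes from chaining along the dyadic grids
of `[0, 2⁻ᵏ]` with thresholds of order `√(2⁻ᵏ (log (k + 2) + N))`: by the Gaussian tail bound some
threshold fails with probability `O(e^{-2N})`, so almost every path obeys all of them for some `N`.
On `[δ^{-α}, 1]` this reads `|W s| ≤ C √(log log δ) √s`.

After `τ*_δ` we have `Q₂ ≥ δ^{-α}`. For `t < 2δ^{-α}` the hypothesis `Q₁ (2δ^{-α}) ≥ δ^{-α}` forces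
`Q₂` to be flat on `[t, 2δ^{-α}]`, so `Q₂' t = 0`. Otherwise `Q₁ t ≥ δ^{-α}` as well, both noise
terms `W₁ (Q₁ t)`, `W₂ (Q₂ t)` are controlled, and `Q₂' = 1 - Φ(x) = Φ(-x)` with
`-x ≤ -g₁ √Q₂ δ + C √(log log δ)`.
-/

open Real Topology
open scoped NNReal ENNReal

lemma Phi_eq_measureReal (x : ℝ) : Phi x = (gaussianReal 0 1).real (Iic x) := by
  rw [measureReal_def, gaussianReal_apply_eq_integral 0 one_ne_zero,
    ENNReal.toReal_ofReal (integral_nonneg fun _ => gaussianPDFReal_nonneg 0 1 _), Phi]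
  simp [gaussianPDFReal]

lemma Phi_nonneg (x : ℝ) : 0 ≤ Phi x := by
  rw [Phi_eq_measureReal]
  exact measureReal_nonneg

lemma monotone_Phi : Monotone Phi := fun x y hxy => by
  simp only [Phi_eq_measureReal]
  exact measureReal_mono (Iic_subset_Iic.2 hxy)

lemma Phi_add_Phi_neg (x : ℝ) : Phi x + Phi (-x) = 1 := by
  have hsymm : (gaussianReal 0 1).map (fun y => -y) = gaussianReal 0 1 := by
    rw [gaussianReal_map_neg, neg_zero]
  have hneg : Phi (-x) = (gaussianReal 0 1).real (Iic x)ᶜ := by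
    rw [Phi_eq_measureReal, ← measureReal_congr
      ((gaussianReal_absolutelyContinuous 0 one_ne_zero).ae_eq Iio_ae_eq_Iic), compl_Iic]
    conv_rhs => rw [← hsymm, map_measureReal_apply measurable_neg measurableSet_Ioi]
    simp
  rw [hneg, Phi_eq_measureReal, measureReal_compl measurableSet_Iic, probReal_univ]
  ring

lemma hasSubgaussianMGF_of_map_eq_gaussianReal {Ω : Type*} [MeasurableSpace Ω] {P : Measure Ω}
    {X : Ω → ℝ} {v : ℝ≥0} (hX : P.map X = gaussianReal 0 v) : HasSubgaussianMGF X v P := by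
  have hXm : AEMeasurable X P := aemeasurable_of_map_neZero (by rw [hX]; infer_instance)
  rw [← HasSubgaussianMGF.id_map_iff hXm, hX]
  exact ⟨integrable_exp_mul_gaussianReal, fun t => by simp [mgf_id_gaussianReal]⟩

lemma measure_abs_ge_le_of_map_eq_gaussianReal {Ω : Type*} [MeasurableSpace Ω] {P : Measure Ω}
    {X : Ω → ℝ} {v : ℝ≥0} (hX : P.map X = gaussianReal 0 v) {a : ℝ} (ha : 0 ≤ a) :
    P {ω | a ≤ |X ω|} ≤ ENNReal.ofReal (2 * exp (-a ^ 2 / (2 * v))) := by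
  have hsub := hasSubgaussianMGF_of_map_eq_gaussianReal hX
  have : IsProbabilityMeasure P := by
    rw [← Measure.isProbabilityMeasure_map_iff hsub.aemeasurable, hX]
    infer_instance
  have hsplit : {ω | a ≤ |X ω|} = {ω | a ≤ X ω} ∪ {ω | a ≤ (-X) ω} := by
    ext ω; simp [le_abs', or_comm, le_neg]
  rw [hsplit, two_mul, ENNReal.ofReal_add (by positivity) (by positivity)]
  refine (measure_union_le _ _).trans (add_le_add ?_ ?_) <;>
    rw [← ofReal_measureReal]
  · exact ENNReal.ofReal_le_ofReal (hsub.measure_ge_le ha)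
  · exact ENNReal.ofReal_le_ofReal (hsub.neg.measure_ge_le ha)

section DyadicChaining

variable {f : ℝ → ℝ} {T : ℝ} {b : ℕ → ℝ}

lemma abs_le_sum_of_dyadic_increments (hf0 : f 0 = 0)
    (hinc : ∀ j i : ℕ, i < 2 ^ j → |f ((i + 1) * (T / 2 ^ j)) - f (i * (T / 2 ^ j))| ≤ b j)
    (m i : ℕ) (hi : i ≤ 2 ^ m) : |f (i * (T / 2 ^ m))| ≤ ∑ j ∈ Finset.range (m + 1), b j := by
  have hb : ∀ j, 0 ≤ b j := fun j => (abs_nonneg _).trans (hinc j 0 (by positivity))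
  induction m generalizing i with
  | zero =>
    interval_cases i
    · simpa [hf0] using hb 0
    · simpa [hf0] using hinc 0 0 one_pos
  | succ m ih =>
    have hpt : ∀ n : ℕ, ((2 * n : ℕ) : ℝ) * (T / 2 ^ (m + 1)) = n * (T / 2 ^ m) := fun n => by
      push_cast; rw [pow_succ]; field_simp
    rw [Finset.sum_range_succ]
    obtain ⟨n, rfl | rfl⟩ := Nat.even_or_odd' i
    · rw [hpt]
      linarith [ih n (by omega), hb (m + 1)]
    · have hstep := hinc (m + 1) (2 * n) (by omega)
      rw [hpt] at hstep
      push_cast at hstep ⊢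
      have := abs_sub_abs_le_abs_sub (f ((2 * n + 1) * (T / 2 ^ (m + 1)))) (f (n * (T / 2 ^ m)))
      linarith [ih n (by omega)]

lemma abs_le_of_dyadic_increments (hf : ContinuousOn f (Icc 0 T)) (hf0 : f 0 = 0) (hT : 0 < T)
    (hinc : ∀ j i : ℕ, i < 2 ^ j → |f ((i + 1) * (T / 2 ^ j)) - f (i * (T / 2 ^ j))| ≤ b j)
    {B : ℝ} (hB : ∀ m, ∑ j ∈ Finset.range m, b j ≤ B) {s : ℝ} (hs : s ∈ Icc 0 T) :
    |f s| ≤ B := by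
  set σ : ℕ → ℝ := fun m => ⌊s / (T / 2 ^ m)⌋₊ * (T / 2 ^ m)
  have hσ : ∀ m, σ m ≤ s ∧ s - T / 2 ^ m ≤ σ m := fun m => by
    have hh : 0 < T / 2 ^ m := by positivity
    constructor
    · exact (le_div_iff₀ hh).1 (Nat.floor_le (div_nonneg hs.1 hh.le))
    · have := (div_lt_iff₀ hh).1 (Nat.lt_floor_add_one (s / (T / 2 ^ m)))
      simp only [σ]; linarith
  have hσle : ∀ m, ⌊s / (T / 2 ^ m)⌋₊ ≤ 2 ^ m := fun m => by
    refine Nat.floor_le_of_le ?_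
    rw [div_le_iff₀ (by positivity)]
    push_cast
    field_simp
    exact hs.2
  have hσmem : ∀ m, σ m ∈ Icc 0 T := fun m =>
    ⟨by positivity, (hσ m).1.trans hs.2⟩
  have hlim : Tendsto σ atTop (𝓝 s) := by
    have hh : Tendsto (fun m : ℕ => s - T / 2 ^ m) atTop (𝓝 s) := by
      simpa using tendsto_const_nhds.sub
        (tendsto_const_nhds.div_atTop (tendsto_pow_atTop_atTop_of_one_lt (one_lt_two (α := ℝ))))
    exact tendsto_of_tendsto_of_tendsto_of_le_of_le hh tendsto_const_nhds
      (fun m => (hσ m).2) (fun m => (hσ m).1)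
  have hflim := ((hf s hs).tendsto.comp
    (tendsto_nhdsWithin_iff.2 ⟨hlim, Eventually.of_forall hσmem⟩)).abs
  exact le_of_tendsto hflim (Eventually.of_forall fun m =>
    (abs_le_sum_of_dyadic_increments hf0 hinc m _ (hσle m)).trans (hB (m + 1)))

end DyadicChaining

/-- Chosen so that `dyadicThreshold T L j ^ 2 / (2 * (T / 2 ^ j)) = 4 * L * (j + 1) ^ 2`. -/
noncomputable def dyadicThreshold (T L : ℝ) (j : ℕ) : ℝ :=
  √(8 * L * T) * ((j + 1) * (√2)⁻¹ ^ j)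

lemma dyadicThreshold_sq_div {T L : ℝ} (hT : 0 < T) (hL : 0 ≤ L) (j : ℕ) :
    dyadicThreshold T L j ^ 2 / (2 * (T / 2 ^ j)) = 4 * L * (j + 1) ^ 2 := by
  have h2 : ((√2)⁻¹ ^ j) ^ 2 = (2 ^ j)⁻¹ := by
    rw [← pow_mul, mul_comm j 2, pow_mul, inv_pow, sq_sqrt zero_le_two, inv_pow]
  rw [dyadicThreshold, mul_pow, mul_pow, sq_sqrt (by positivity), h2]
  field_simp
  ring

lemma summable_succ_mul_inv_sqrt_two_pow :
    Summable fun j : ℕ => ((j : ℝ) + 1) * (√2)⁻¹ ^ j := by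
  have hr : ‖(√2)⁻¹‖ < 1 := by
    rw [norm_inv, norm_of_nonneg (sqrt_nonneg 2)]
    exact inv_lt_one_of_one_lt₀ (by rw [lt_sqrt zero_le_one]; norm_num)
  simpa [add_mul] using (summable_pow_mul_geometric_of_norm_lt_one 1 hr).add
    (summable_geometric_of_norm_lt_one hr)

lemma two_pow_mul_exp_le {L : ℝ} (hL : log 2 ≤ L) (j : ℕ) :
    2 ^ j * (2 * exp (-(4 * L * (j + 1) ^ 2))) ≤ exp (-(2 * L)) / 2 / 2 ^ j := by
  have hL0 : 0 ≤ L := (log_nonneg one_le_two).trans hL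
  have h4 : (4 : ℝ) ^ (j + 1) = exp (2 * log 2 * (j + 1)) := by
    rw [show (4 : ℝ) = exp (2 * log 2) by rw [mul_comm, exp_mul, exp_log two_pos]; norm_num,
      ← exp_nat_mul]
    push_cast
    ring_nf
  rw [le_div_iff₀ (by positivity), le_div_iff₀ two_pos]
  calc 2 ^ j * (2 * exp (-(4 * L * (j + 1) ^ 2))) * 2 ^ j * 2
      = 4 ^ (j + 1) * exp (-(4 * L * (j + 1) ^ 2)) := by
        rw [show (4 : ℝ) = 2 * 2 by norm_num, mul_pow, pow_succ]
        ring
    _ ≤ exp (-(2 * L)) := by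
        rw [h4, ← exp_add]
        gcongr
        nlinarith [mul_nonneg hL0 (j.cast_nonneg (α := ℝ)), sq_nonneg (j : ℝ)]

def HasGaussianIncrements {Ω : Type*} [MeasurableSpace Ω] (P : Measure Ω) (W : ℝ → Ω → ℝ) :
    Prop :=
  ∀ s t : ℝ, 0 ≤ s → s < t →
    P.map (fun ω => W t ω - W s ω) = gaussianReal 0 (Real.toNNReal (t - s))

namespace HasGaussianIncrements

variable {Ω : Type*} [MeasurableSpace Ω] {P : Measure Ω} {W : ℝ → Ω → ℝ}

lemma measure_dyadicThreshold_le_abs_sub_le (hW : HasGaussianIncrements P W) {T L : ℝ}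
    (hT : 0 < T) (hL : 0 ≤ L) (j i : ℕ) :
    P {ω | dyadicThreshold T L j ≤ |W ((i + 1) * (T / 2 ^ j)) ω - W (i * (T / 2 ^ j)) ω|}
      ≤ ENNReal.ofReal (2 * exp (-(4 * L * (j + 1) ^ 2))) := by
  have hh : 0 < T / 2 ^ j := by positivity
  have hmap := hW (i * (T / 2 ^ j)) ((i + 1) * (T / 2 ^ j)) (by positivity) (by linarith)
  rw [show ((i : ℝ) + 1) * (T / 2 ^ j) - i * (T / 2 ^ j) = T / 2 ^ j by ring] at hmap
  have := measure_abs_ge_le_of_map_eq_gaussianReal hmap (a := dyadicThreshold T L j)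
    (by unfold dyadicThreshold; positivity)
  rwa [coe_toNNReal _ hh.le, neg_div, dyadicThreshold_sq_div hT hL] at this

lemma measure_exists_dyadicThreshold_lt_abs_sub_le (hW : HasGaussianIncrements P W) {T L : ℝ}
    (hT : 0 < T) (hL : log 2 ≤ L) :
    P {ω | ∃ j i : ℕ, i < 2 ^ j ∧
        dyadicThreshold T L j < |W ((i + 1) * (T / 2 ^ j)) ω - W (i * (T / 2 ^ j)) ω|}
      ≤ ENNReal.ofReal (exp (-(2 * L))) := by
  have hL0 : 0 ≤ L := (log_nonneg one_le_two).trans hL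
  calc _ ≤ P (⋃ j : ℕ, ⋃ i ∈ Finset.range (2 ^ j), {ω | dyadicThreshold T L j ≤
          |W ((i + 1) * (T / 2 ^ j)) ω - W (i * (T / 2 ^ j)) ω|}) := by
        refine measure_mono fun ω ⟨j, i, hi, hgt⟩ => ?_
        simp only [mem_iUnion, Finset.mem_range]
        exact ⟨j, i, hi, hgt.le⟩
    _ ≤ ∑' j : ℕ, ∑ i ∈ Finset.range (2 ^ j), P {ω | dyadicThreshold T L j ≤
          |W ((i + 1) * (T / 2 ^ j)) ω - W (i * (T / 2 ^ j)) ω|} :=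
        (measure_iUnion_le _).trans (ENNReal.tsum_le_tsum fun j => measure_biUnion_finset_le _ _)
    _ ≤ ∑' j : ℕ, ENNReal.ofReal (exp (-(2 * L)) / 2 / 2 ^ j) := by
        refine ENNReal.tsum_le_tsum fun j => (Finset.sum_le_sum fun i _ =>
          hW.measure_dyadicThreshold_le_abs_sub_le hT hL0 j i).trans ?_
        rw [Finset.sum_const, Finset.card_range, nsmul_eq_mul, Nat.cast_pow, Nat.cast_ofNat,
          ← ENNReal.ofReal_ofNat 2, ← ENNReal.ofReal_pow zero_le_two,
          ← ENNReal.ofReal_mul (by positivity)]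
        exact ENNReal.ofReal_le_ofReal (two_pow_mul_exp_le hL j)
    _ = ENNReal.ofReal (exp (-(2 * L))) := by
        rw [← ENNReal.ofReal_tsum_of_nonneg (fun j => by positivity) (summable_geometric_two' _),
          tsum_geometric_two']

lemma measure_exists_scale_dyadicThreshold_lt_abs_sub_le (hW : HasGaussianIncrements P W)
    (N : ℕ) :
    P {ω | ∃ k j i : ℕ, i < 2 ^ j ∧ dyadicThreshold (2 ^ k)⁻¹ (log (k + 2) + N) j <
        |W ((i + 1) * ((2 ^ k)⁻¹ / 2 ^ j)) ω - W (i * ((2 ^ k)⁻¹ / 2 ^ j)) ω|}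
      ≤ ENNReal.ofReal (exp (-(2 * N)) * ∑' k : ℕ, (((k : ℝ) + 2) ^ 2)⁻¹) := by
  have hsum : Summable fun k : ℕ => (((k : ℝ) + 2) ^ 2)⁻¹ := by
    simpa using (summable_nat_add_iff 2).2 (summable_nat_pow_inv.2 one_lt_two)
  have hexp : ∀ k : ℕ,
      exp (-(2 * (log (k + 2) + N))) = exp (-(2 * N)) * (((k : ℝ) + 2) ^ 2)⁻¹ := fun k => by
    rw [show -(2 * (log (k + 2) + N)) = -(2 * N) + -(2 * log (k + 2)) by ring, exp_add,
      ← log_rpow (by positivity), ← log_inv, exp_log (by positivity)]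
    norm_cast
  rw [ofPred_exists, ← tsum_mul_left,
    ENNReal.ofReal_tsum_of_nonneg (fun k => by positivity) (hsum.mul_left _)]
  refine (measure_iUnion_le _).trans (ENNReal.tsum_le_tsum fun k => ?_)
  rw [← hexp]
  refine hW.measure_exists_dyadicThreshold_lt_abs_sub_le (by positivity) ?_
  have : log 2 ≤ log (k + 2) := log_le_log two_pos (by linarith [k.cast_nonneg (α := ℝ)])
  linarith [N.cast_nonneg (α := ℝ)]

lemma ae_exists_abs_sub_le_dyadicThreshold (hW : HasGaussianIncrements P W) :
    ∀ᵐ ω ∂P, ∃ N : ℕ, ∀ k j i : ℕ, i < 2 ^ j →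
      |W ((i + 1) * ((2 ^ k)⁻¹ / 2 ^ j)) ω - W (i * ((2 ^ k)⁻¹ / 2 ^ j)) ω|
        ≤ dyadicThreshold (2 ^ k)⁻¹ (log (k + 2) + N) j := by
  set Z := ∑' k : ℕ, (((k : ℝ) + 2) ^ 2)⁻¹
  have hlim : Tendsto (fun N : ℕ => ENNReal.ofReal (exp (-(2 * N)) * Z)) atTop (𝓝 0) := by
    have : Tendsto (fun N : ℕ => exp (-(2 * N))) atTop (𝓝 0) :=
      tendsto_exp_atBot.comp (tendsto_neg_atTop_atBot.comp
        (tendsto_natCast_atTop_atTop.const_mul_atTop two_pos))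
    simpa using ENNReal.tendsto_ofReal (this.mul_const Z)
  rw [ae_iff]
  refine le_antisymm (ge_of_tendsto' hlim fun N => ?_) bot_le
  refine (measure_mono fun ω hω => ?_).trans
    (hW.measure_exists_scale_dyadicThreshold_lt_abs_sub_le N)
  simp only [mem_ofPred_eq, not_exists, not_forall, not_le] at hω ⊢
  obtain ⟨k, j, i, hi, h⟩ := hω N
  exact ⟨k, j, i, hi, h⟩

end HasGaussianIncrements

lemma abs_le_of_abs_sub_le_dyadicThreshold {f : ℝ → ℝ} {T L s : ℝ}
    (hf : ContinuousOn f (Icc 0 T)) (hf0 : f 0 = 0) (hT : 0 < T)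
    (hinc : ∀ j i : ℕ, i < 2 ^ j →
      |f ((i + 1) * (T / 2 ^ j)) - f (i * (T / 2 ^ j))| ≤ dyadicThreshold T L j)
    (hs : s ∈ Icc 0 T) :
    |f s| ≤ √(8 * L * T) * ∑' j : ℕ, ((j : ℝ) + 1) * (√2)⁻¹ ^ j := by
  refine abs_le_of_dyadic_increments hf hf0 hT hinc (fun m => ?_) hs
  simp only [dyadicThreshold, ← Finset.mul_sum]
  exact mul_le_mul_of_nonneg_left (summable_succ_mul_inv_sqrt_two_pow.sum_le_tsum _
    (fun j _ => by positivity)) (sqrt_nonneg _)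

lemma log_nat_add_two_le {x : ℝ} (hx : 1 ≤ x) {k : ℕ} (hk : 2 ^ k ≤ x) :
    log (k + 2) ≤ 1 + log (1 + log x) := by
  have hk' : k * log 2 ≤ log x := by
    rw [← log_pow]
    exact log_le_log (by positivity) hk
  have hlx : 0 ≤ log x := log_nonneg hx
  have : (k : ℝ) + 2 ≤ 2 * (1 + log x) := by
    nlinarith [log_two_gt_d9, k.cast_nonneg (α := ℝ)]
  calc log (k + 2) ≤ log (2 * (1 + log x)) := log_le_log (by positivity) this
    _ = log 2 + log (1 + log x) := log_mul two_ne_zero (by positivity)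
    _ ≤ 1 + log (1 + log x) := by linarith [log_two_lt_d9]

theorem ae_abs_le_sqrt_mul_log_log {Ω : Type*} [MeasurableSpace Ω] {P : Measure Ω}
    {W : ℝ → Ω → ℝ} (hcont : ∀ ω, Continuous fun t => W t ω) (h0 : ∀ ω, W 0 ω = 0)
    (hW : HasGaussianIncrements P W) :
    ∀ᵐ ω ∂P, ∃ A > 0, ∀ s ∈ Ioc (0 : ℝ) 1, |W s ω| ≤ A * √(s * (1 + log (1 + log s⁻¹))) := by
  filter_upwards [hW.ae_exists_abs_sub_le_dyadicThreshold] with ω ⟨N, hN⟩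
  set S := ∑' j : ℕ, ((j : ℝ) + 1) * (√2)⁻¹ ^ j
  have hS : 0 < S :=
    summable_succ_mul_inv_sqrt_two_pow.tsum_pos (fun j => by positivity) 0 (by norm_num)
  refine ⟨4 * S * √(N + 1), by positivity, fun s hs => ?_⟩
  obtain ⟨k, hk, hk1⟩ := exists_nat_pow_near (one_le_inv_iff₀.2 hs) (one_lt_two (α := ℝ))
  set T : ℝ := (2 ^ k)⁻¹
  set G : ℝ := 1 + log (1 + log s⁻¹)
  have hsT : s ≤ T := (le_inv_comm₀ hs.1 (by positivity)).2 hk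
  have hTs : T ≤ 2 * s := by
    have := (inv_lt_comm₀ (by positivity) hs.1).2 hk1
    rw [pow_succ, mul_inv] at this
    linarith
  have hG : 1 ≤ G := by
    have := log_nonneg (one_le_inv_iff₀.2 hs)
    linarith [log_nonneg (by linarith : (1 : ℝ) ≤ 1 + log s⁻¹)]
  have hLG : log (k + 2) + N ≤ (N + 1) * G := by
    nlinarith [log_nat_add_two_le (one_le_inv_iff₀.2 hs) hk, N.cast_nonneg (α := ℝ)]
  calc |W s ω| ≤ √(8 * (log (k + 2) + N) * T) * S :=
        abs_le_of_abs_sub_le_dyadicThreshold (hcont ω).continuousOn (h0 ω) (by positivity)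
          (hN k) ⟨hs.1.le, hsT⟩
    _ ≤ √(8 * ((N + 1) * G) * (2 * s)) * S := by gcongr
    _ = 4 * S * √(N + 1) * √(s * G) := by
      rw [show 8 * ((N + 1) * G) * (2 * s) = 4 ^ 2 * (N + 1) * (s * G) by ring,
        sqrt_mul (by positivity), sqrt_mul (by positivity), sqrt_sq (by norm_num)]
      ring

lemma one_add_log_one_add_log_inv_le {α δ s : ℝ} (hα : 0 ≤ α) (hδ : exp (exp 1) ≤ δ)
    (hs : s ∈ Icc (δ ^ (-α)) 1) :
    1 + log (1 + log s⁻¹) ≤ (2 + log (1 + α)) * log (log δ) := by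
  have hδ0 : 0 < δ := (exp_pos _).trans_le hδ
  have hs0 : 0 < s := (rpow_pos_of_pos hδ0 _).trans_le hs.1
  have hlogδ : exp 1 ≤ log δ := by rwa [le_log_iff_exp_le hδ0]
  have hLL : 1 ≤ log (log δ) := by rwa [le_log_iff_exp_le ((exp_pos 1).trans_le hlogδ)]
  have hlog1 : 1 ≤ log δ := (one_le_exp zero_le_one).trans hlogδ
  have hlogs : log s⁻¹ ≤ α * log δ := by
    rw [← log_rpow hδ0]
    refine log_le_log (inv_pos.2 hs0) ((inv_le_comm₀ hs0 (rpow_pos_of_pos hδ0 α)).2 ?_)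
    rw [← rpow_neg hδ0.le]
    exact hs.1
  have hlogs0 : 0 ≤ log s⁻¹ := log_nonneg (one_le_inv_iff₀.2 ⟨hs0, hs.2⟩)
  have hα1 : 0 ≤ log (1 + α) := log_nonneg (by linarith)
  have : log (1 + log s⁻¹) ≤ log (1 + α) + log (log δ) := by
    rw [← log_mul (by linarith) (by linarith)]
    exact log_le_log (by linarith) (by nlinarith)
  nlinarith

lemma abs_le_sqrt_log_log_mul_sqrt {w : ℝ → ℝ} {A α δ : ℝ} (hA : 0 ≤ A) (hα : 0 ≤ α)
    (hδ : exp (exp 1) ≤ δ) (hw : ∀ s ∈ Ioc (0 : ℝ) 1, |w s| ≤ A * √(s * (1 + log (1 + log s⁻¹))))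
    {s : ℝ} (hs : s ∈ Icc (δ ^ (-α)) 1) :
    |w s| ≤ A * √(2 + log (1 + α)) * √(log (log δ)) * √s := by
  have hs0 : 0 < s := (rpow_pos_of_pos ((exp_pos _).trans_le hδ) _).trans_le hs.1
  calc |w s| ≤ A * √(s * (1 + log (1 + log s⁻¹))) := hw s ⟨hs0, hs.2⟩
    _ ≤ A * √(s * ((2 + log (1 + α)) * log (log δ))) := by
      gcongr
      exact one_add_log_one_add_log_inv_le hα hδ hs
    _ = A * √(2 + log (1 + α)) * √(log (log δ)) * √s := by
      rw [sqrt_mul hs0.le, sqrt_mul (by linarith [log_nonneg (by linarith : (1 : ℝ) ≤ 1 + α)])]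
      ring

lemma neg_div_sqrt_le {δ c₁ c₂ t q₁ q₂ x₁ x₂ : ℝ} (hq₁ : 0 < q₁) (hq₂ : 0 < q₂)
    (hq₁t : q₁ ≤ t) (hq₂t : q₂ ≤ t) (hx₁ : |x₁| ≤ c₁ * √q₁) (hx₂ : |x₂| ≤ c₂ * √q₂) :
    -((δ * q₁ * q₂ + q₂ * x₁ - q₁ * x₂) / √(t * q₁ * q₂)) ≤
      -√(q₁ / t) * √q₂ * δ + (c₁ + c₂) := by
  obtain ⟨a, ha, rfl⟩ : ∃ a, 0 < a ∧ a ^ 2 = q₁ := ⟨√q₁, sqrt_pos.2 hq₁, sq_sqrt hq₁.le⟩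
  obtain ⟨b, hb, rfl⟩ : ∃ b, 0 < b ∧ b ^ 2 = q₂ := ⟨√q₂, sqrt_pos.2 hq₂, sq_sqrt hq₂.le⟩
  obtain ⟨r, hr, rfl⟩ : ∃ r, 0 < r ∧ r ^ 2 = t :=
    ⟨√t, sqrt_pos.2 (hq₁.trans_le hq₁t), sq_sqrt (hq₁.le.trans hq₁t)⟩
  have har : a ≤ r := by nlinarith
  have hbr : b ≤ r := by nlinarith
  rw [sqrt_sq ha.le, sqrt_sq hb.le] at *
  rw [show r ^ 2 * a ^ 2 * b ^ 2 = (r * a * b) ^ 2 by ring, ← div_pow,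
    sqrt_sq (by positivity), sqrt_sq (by positivity)]
  have hc₁ : 0 ≤ c₁ * a := (abs_nonneg _).trans hx₁
  have hc₂ : 0 ≤ c₂ * b := (abs_nonneg _).trans hx₂
  have h₁ : b ^ 2 * -x₁ ≤ c₁ * (r * a * b) := by
    nlinarith [neg_le_abs x₁, mul_le_mul_of_nonneg_left hbr (mul_nonneg hc₁ hb.le)]
  have h₂ : a ^ 2 * x₂ ≤ c₂ * (r * a * b) := by
    nlinarith [le_abs_self x₂, mul_le_mul_of_nonneg_left har (mul_nonneg hc₂ ha.le)]
  have hsplit : -((δ * a ^ 2 * b ^ 2 + b ^ 2 * x₁ - a ^ 2 * x₂) / (r * a * b))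
      = -(a / r) * b * δ + (b ^ 2 * -x₁ + a ^ 2 * x₂) / (r * a * b) := by
    field_simp
    ring
  rw [hsplit, add_le_add_iff_left, div_le_iff₀ (by positivity)]
  linarith

lemma HasDerivWithinAt.eq_zero_of_monotoneOn {f : ℝ → ℝ} {f' a b t u : ℝ}
    (hf : HasDerivWithinAt f f' (Icc a b) t) (hmono : MonotoneOn f (Icc a b)) (hat : a ≤ t)
    (htu : t < u) (hub : u ≤ b) (hfu : f u ≤ f t) : f' = 0 := by
  have hsub : Icc t u ⊆ Icc a b := Icc_subset_Icc hat hub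
  have hconst : EqOn (fun _ => f t) f (Icc t u) := fun x hx =>
    le_antisymm (hmono ⟨hat, htu.le.trans hub⟩ (hsub hx) hx.1)
      ((hmono (hsub hx) ⟨hat.trans htu.le, hub⟩ hx.2).trans hfu)
  exact ((uniqueDiffOn_Icc htu) t (left_mem_Icc.2 htu.le)).eq_deriv _ (hf.mono hsub)
    ((hasDerivWithinAt_const t _ (f t)).congr hconst.symm rfl)

lemma pos_and_le_apply_of_sInf_le {f : ℝ → ℝ} {β t : ℝ} (hf : ContinuousOn f (Icc 0 1))
    (hmono : MonotoneOn f (Icc 0 1)) (hf0 : f 0 < β)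
    (ht : sInf ({s ∈ Icc (0 : ℝ) 1 | β ≤ f s} ∪ {1}) ≤ t) (ht1 : t < 1) :
    0 < t ∧ β ≤ f t := by
  set S := {s ∈ Icc (0 : ℝ) 1 | β ≤ f s}
  have hS : IsClosed (S ∪ {1}) :=
    (hf.preimage_isClosed_of_isClosed isClosed_Icc isClosed_Ici).union isClosed_singleton
  have hbdd : BddBelow (S ∪ {1}) := ⟨0, by rintro s (hs | rfl) <;> simp_all [S]⟩
  obtain hτ | hτ := hS.csInf_mem (union_nonempty.2 (Or.inr (singleton_nonempty 1))) hbdd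
  · have hτ0 : 0 < sInf (S ∪ {1}) :=
      hτ.1.1.lt_of_ne fun h => (h ▸ hτ.2).not_gt hf0
    exact ⟨hτ0.trans_le ht, hτ.2.trans (hmono hτ.1 ⟨hτ.1.1.trans ht, ht1.le⟩ ht)⟩
  · exact absurd (hτ ▸ ht) ht1.not_ge

namespace IsTwoArmSol

variable {w₁ w₂ : ℝ → ℝ} {δ : ℝ} {Q₁ Q₂ : ℝ → ℝ}

lemma hasDerivWithinAt_Q₂ (h : IsTwoArmSol w₁ w₂ δ Q₁ Q₂) {t : ℝ} (ht : t ∈ Ioc (0 : ℝ) 1) :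
    HasDerivWithinAt Q₂ (Phi (-((δ * Q₁ t * Q₂ t + Q₂ t * w₁ (Q₁ t) - Q₁ t * w₂ (Q₂ t)) /
      √(t * Q₁ t * Q₂ t)))) (Icc 0 1) t := by
  obtain ⟨-, -, -, -, -, -, hsum, -, -, hQ₁⟩ := h
  have hQ₂ : EqOn Q₂ (fun s => s - Q₁ s) (Icc 0 1) := fun s hs => by linarith [hsum s hs]
  rw [← sub_eq_of_eq_add' (Phi_add_Phi_neg _).symm]
  exact ((hasDerivWithinAt_id t _).sub (hQ₁ t ht)).congr hQ₂ (hQ₂ ⟨ht.1.le, ht.2⟩)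

theorem derivWithin_Q₂_le (h : IsTwoArmSol w₁ w₂ δ Q₁ Q₂) {β c₁ c₂ : ℝ} (hβ : 0 < β)
    (h2β : 2 * β ≤ 1) (hQ₁ : β ≤ Q₁ (2 * β)) (hw₁ : ∀ s ∈ Icc β 1, |w₁ s| ≤ c₁ * √s)
    (hw₂ : ∀ s ∈ Icc β 1, |w₂ s| ≤ c₂ * √s) {t : ℝ}
    (ht : sInf ({s ∈ Icc (0 : ℝ) 1 | β ≤ Q₂ s} ∪ {1}) ≤ t) (ht1 : t < 1) :
    derivWithin Q₂ (Icc 0 1) t ≤ Phi (-√(Q₁ t / t) * √(Q₂ t) * δ + (c₁ + c₂)) := by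
  obtain ⟨-, hQ₂c, hQ₁m, hQ₂m, -, hQ₂0, hsum, hQ₁pos, hQ₂pos, -⟩ := id h
  obtain ⟨ht0, hQ₂t⟩ := pos_and_le_apply_of_sInf_le hQ₂c hQ₂m (hQ₂0.trans_lt hβ) ht ht1
  have htmem : t ∈ Icc (0 : ℝ) 1 := ⟨ht0.le, ht1.le⟩
  have h2βmem : 2 * β ∈ Icc (0 : ℝ) 1 := ⟨by positivity, h2β⟩
  have hderiv := hasDerivWithinAt_Q₂ h ⟨ht0, ht1.le⟩
  rw [hderiv.derivWithin (uniqueDiffOn_Icc_zero_one t htmem)]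
  rcases lt_or_ge t (2 * β) with hlt | hge
  · -- `Q₂` is flat on `[t, 2β]`, since `Q₂ (2β) = 2β - Q₁ (2β) ≤ β`
    rw [hderiv.eq_zero_of_monotoneOn hQ₂m ht0.le hlt h2β (by linarith [hsum _ h2βmem])]
    exact Phi_nonneg _
  · have hQ₁t : β ≤ Q₁ t := hQ₁.trans (hQ₁m h2βmem htmem hge)
    have := hsum t htmem
    refine monotone_Phi (neg_div_sqrt_le (hβ.trans_le hQ₁t) (hβ.trans_le hQ₂t) ?_ ?_
      (hw₁ _ ⟨hQ₁t, ?_⟩) (hw₂ _ ⟨hQ₂t, ?_⟩)) <;>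
    linarith [hQ₁pos t ⟨ht0, ht1.le⟩, hQ₂pos t ⟨ht0, ht1.le⟩]

end IsTwoArmSol

/-- Drift bound for the inferior arm after `Q₂` reaches `δ^{-α}`: almost surely, for all
large `δ` and any solution with `Q₁(v) ≥ δ^{-α}` (`v = 2δ^{-α}`), for all
`t ∈ [τ*_δ, 1)`, `Q₂'(t) ≤ Φ(-g₁(t)√(Q₂(t))δ + C√(log log δ))` with `g₁(t) = √(Q₁(t)/t)`. -/
theorem Q2_drift_bound {Ω : Type*} [MeasurableSpace Ω] (P : Measure Ω)
    (W₁ W₂ : ℝ → Ω → ℝ) (hW : IndepBMs P W₁ W₂) (α : ℝ) (hα : α ∈ Set.Ioo (1 : ℝ) 2) :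
    ∀ᵐ ω ∂P, ∃ C > (0 : ℝ), ∃ δ₀ : ℝ, ∀ δ ≥ δ₀, ∀ Q₁ Q₂ : ℝ → ℝ,
      IsTwoArmSol (fun x => W₁ x ω) (fun x => W₂ x ω) δ Q₁ Q₂ →
      δ ^ (-α) ≤ Q₁ (2 * δ ^ (-α)) →
      ∀ t : ℝ,
        sInf ({s ∈ Set.Icc (0 : ℝ) 1 | δ ^ (-α) ≤ Q₂ s} ∪ {1}) ≤ t → t < 1 →
        derivWithin Q₂ (Set.Icc 0 1) t ≤
          Phi (-(Real.sqrt (Q₁ t / t)) * Real.sqrt (Q₂ t) * δ +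
            C * Real.sqrt (Real.log (Real.log δ))) := by
  obtain ⟨⟨hc₁, h0₁, hmap₁, -⟩, ⟨hc₂, h0₂, hmap₂, -⟩, -⟩ := hW
  filter_upwards [ae_abs_le_sqrt_mul_log_log hc₁ h0₁ hmap₁,
    ae_abs_le_sqrt_mul_log_log hc₂ h0₂ hmap₂] with ω ⟨A₁, hA₁, hW₁⟩ ⟨A₂, hA₂, hW₂⟩
  have hα0 : 0 ≤ α := zero_le_one.trans hα.1.le
  set K := 2 + log (1 + α)
  have hK : 0 < K := by linarith [log_nonneg (by linarith : (1 : ℝ) ≤ 1 + α)]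
  refine ⟨(A₁ + A₂) * √K, by positivity, exp (exp 1),
    fun δ hδ Q₁ Q₂ hsol hQ₁ t ht ht1 => ?_⟩
  have hδ2 : 2 ≤ δ := by linarith [add_one_le_exp 1, exp_le_exp.2 (one_le_exp zero_le_one)]
  have h2β : 2 * δ ^ (-α) ≤ 1 := by
    have := rpow_le_rpow_of_exponent_le (by linarith : 1 ≤ δ) (neg_le_neg hα.1.le)
    rw [rpow_neg_one] at this
    linarith [inv_anti₀ two_pos hδ2]
  convert hsol.derivWithin_Q₂_le (by positivity) h2β hQ₁
    (fun s hs => abs_le_sqrt_log_log_mul_sqrt hA₁.le hα0 hδ hW₁ hs)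
    (fun s hs => abs_le_sqrt_log_log_mul_sqrt hA₂.le hα0 hδ hW₂ hs) ht ht1 using 2
  ring
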